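/- arXiv:1612.03660 — 5 statements merged into one kernel-verified Lean document; each statement's English description precedes it below -/
import Mathlib

section
/- Let m ∈ ℕ, p ∈ ℤ≥0, and n := (p+2)^m. Then there exist positive real numbers a_{αβ}, α ∈ {1,…,m}, β ∈ {1,…,n}, such that the vectors v(p₁,…,p_m) ∈ ℝ^n, whose β-th entry equals ∏_{α=1}^m a_{αβ}^{p_α}, taken over all (p₁,…,p_m) ∈ ℤ≥0^m with p₁+…+p_m ≤ p, are linearly independent. -/
/-! Take `a α β = b β ^ (p + 2) ^ α` with distinct `b β`. Then `v(q)` is the column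
`β ↦ b β ^ i` of the Vandermonde matrix of `b`, where `i = ∑ α, q α * (p + 2) ^ α`. Entries of `q`
are at most `p`, hence base-`(p + 2)` digits of `i`, so distinct `q` pick distinct columns of an
invertible matrix. -/

open Function

theorem linearIndependent_pow_of_injective {K : Type*} [Field K] {n : ℕ} {b : Fin n → K}
    (hb : Injective b) : LinearIndependent K (fun i : Fin n => fun β => b β ^ (i : ℕ)) :=
  Matrix.linearIndependent_cols_iff_isUnit.mpr <|
    (Matrix.isUnit_iff_isUnit_det _).mpr (Matrix.det_vandermonde_ne_zero_iff.mpr hb).isUnit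

theorem prod_pow_pow_eq_pow_finFunctionFinEquiv {M : Type*} [CommMonoid M] {k m : ℕ} (x : M)
    (d : Fin m → Fin k) :
    ∏ α : Fin m, (x ^ k ^ (α : ℕ)) ^ (d α : ℕ) = x ^ (finFunctionFinEquiv d : ℕ) := by
  simp only [finFunctionFinEquiv_apply, ← Finset.prod_pow_eq_pow_sum, ← pow_mul, mul_comm]

theorem linearIndependent_prod_pow_pow {K ι : Type*} [Field K] {k m : ℕ} {b : Fin (k ^ m) → K}
    (hb : Injective b) {q : ι → Fin m → ℕ} (hq : Injective q) (hlt : ∀ i α, q i α < k) :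
    LinearIndependent K (fun i β => ∏ α : Fin m, (b β ^ k ^ (α : ℕ)) ^ q i α) := by
  let digits : ι → Fin m → Fin k := fun i α => ⟨q i α, hlt i α⟩
  have hdigits : Injective digits := fun i j h =>
    hq <| funext fun α => congrArg Fin.val (congrFun h α)
  have hfamily : (fun i β => ∏ α : Fin m, (b β ^ k ^ (α : ℕ)) ^ q i α) =
      (fun i : Fin (k ^ m) => fun β => b β ^ (i : ℕ)) ∘ finFunctionFinEquiv ∘ digits := by
    funext i β
    exact prod_pow_pow_eq_pow_finFunctionFinEquiv (b β) (digits i)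
  rw [hfamily]
  exact (linearIndependent_pow_of_injective hb).comp _
    (finFunctionFinEquiv.injective.comp hdigits)

theorem stmt3 (m p : ℕ) :
    ∃ a : Fin m → Fin ((p + 2) ^ m) → ℝ, (∀ α β, 0 < a α β) ∧
      LinearIndependent ℝ
        (fun (q : {q : Fin m → ℕ // ∑ α, q α ≤ p}) =>
          (fun β => ∏ α, a α β ^ q.1 α : Fin ((p + 2) ^ m) → ℝ)) := by
  let b : Fin ((p + 2) ^ m) → ℝ := fun β => β + 1
  have hb : Injective b := fun β γ h => Fin.ext <| by simpa [b] using h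
  refine ⟨fun α β => b β ^ (p + 2) ^ (α : ℕ), fun α β => by positivity, ?_⟩
  refine linearIndependent_prod_pow_pow hb Subtype.val_injective fun q α => ?_
  have := Finset.single_le_sum (fun α _ => Nat.zero_le (q.1 α)) (Finset.mem_univ α)
  omega
end

section
/- Let f : ℝ≥0^m → ℝ≥0 be a symmetric function possessing continuous partial derivatives of all orders. If for every n ∈ ℕ and every n×n positive semidefinite block matrix (A_{αβ}) with diagonal (hence positive semidefinite) m×m entries the matrix (f(A_{αβ})) is positive semidefinite, then all partial derivatives ∂^{q₁+…+q_m} f / (∂x₁^{q₁}⋯∂x_m^{q_m}) are nonnegative on ℝ≥0^m. -/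
open Matrix
open scoped ComplexOrder
open scoped Topology

/-- A block matrix `(A_{αβ})` with `m×m` complex entries is positive semidefinite
if the corresponding `mn×mn` matrix is positive semidefinite. -/
def IsPosSemidefBlock {m n : ℕ} (A : Fin n → Fin n → Matrix (Fin m) (Fin m) ℂ) : Prop :=
  (Matrix.of fun p q : Fin n × Fin m => A p.1 q.1 p.2 q.2).PosSemidef

/-- The partial derivative of `f` in the `i`-th coordinate direction. -/
noncomputable def partialDeriv {m : ℕ} (i : Fin m) (f : (Fin m → ℝ) → ℝ) :
    (Fin m → ℝ) → ℝ :=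
  fun x => fderiv ℝ f x (Pi.single i 1)

/-- Iterated mixed partial derivatives, along a list of coordinate directions. -/
noncomputable def mixedPartial {m : ℕ} : List (Fin m) → ((Fin m → ℝ) → ℝ) →
    ((Fin m → ℝ) → ℝ)
  | [], f => f
  | i :: l, f => mixedPartial l (partialDeriv i f)

namespace Stmt6Aux

/-- quadratic form of a real matrix -/
def quad {n : ℕ} (M : Matrix (Fin n) (Fin n) ℝ) (v : Fin n → ℝ) : ℝ :=
  ∑ α, ∑ β, v α * M α β * v β

lemma quad_eq {n : ℕ} (M : Matrix (Fin n) (Fin n) ℝ) (v : Fin n → ℝ) :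
    star v ⬝ᵥ M *ᵥ v = quad M v := by
  simp [quad, dotProduct, Matrix.mulVec, Finset.mul_sum, mul_assoc]

lemma posSemidef_of_quad {n : ℕ} {M : Matrix (Fin n) (Fin n) ℝ}
    (hs : ∀ α β, M α β = M β α) (hq : ∀ v, 0 ≤ quad M v) : M.PosSemidef := by
  refine Matrix.PosSemidef.of_dotProduct_mulVec_nonneg ?_ fun v => by rw [quad_eq]; exact hq v
  ext α β
  simp [Matrix.conjTranspose_apply, hs α β]

lemma quad_nonneg {n : ℕ} {M : Matrix (Fin n) (Fin n) ℝ} (h : M.PosSemidef)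
    (v : Fin n → ℝ) : 0 ≤ quad M v := by
  rw [← quad_eq]; exact h.dotProduct_mulVec_nonneg v

lemma sym_of_psd {n : ℕ} {M : Matrix (Fin n) (Fin n) ℝ} (h : M.PosSemidef) (α β : Fin n) :
    M α β = M β α := by
  have := congrFun (congrFun h.1 α) β
  simpa [Matrix.conjTranspose_apply] using this.symm

/-- mapping a real PSD matrix to ℂ gives a PSD matrix -/
lemma psd_map_complex {n : ℕ} {M : Matrix (Fin n) (Fin n) ℝ} (h : M.PosSemidef) :
    (M.map (fun r => (r : ℂ))).PosSemidef := by
  obtain ⟨B, rfl⟩ : ∃ B : Matrix (Fin n) (Fin n) ℝ, M = Bᴴ * B := by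
    classical
    open scoped MatrixOrder in
    obtain ⟨X, hX, -, hXX⟩ := sub_zero M ▸ CFC.exists_sqrt_of_isSelfAdjoint_of_quasispectrumRestricts
      h.isHermitian (QuasispectrumRestricts.nnreal_of_nonneg h.nonneg)
    rw [sub_zero] at hXX
    exact ⟨X, by rw [← hXX, ← Matrix.star_eq_conjTranspose, hX.star_eq]⟩
  have : (Bᴴ * B).map (fun r => (r : ℂ)) =
      (B.map (fun r => (r : ℂ)))ᴴ * (B.map (fun r => (r : ℂ))) := by
    ext α β
    simp [Matrix.mul_apply, Matrix.conjTranspose_apply, Matrix.map_apply]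
  rw [this]
  exact Matrix.posSemidef_conjTranspose_mul_self _

/-- the block diagonal matrix is PSD when each coordinate matrix is PSD -/
lemma block_psd {m n : ℕ} (d : Fin n → Fin n → Fin m → ℝ)
    (hpsd : ∀ i, (Matrix.of fun α β => d α β i).PosSemidef) :
    (Matrix.of fun p q : Fin n × Fin m =>
      (Matrix.diagonal fun i => (d p.1 q.1 i : ℂ)) p.2 q.2).PosSemidef := by
  have hC : ∀ i, ((Matrix.of fun α β => d α β i).map (fun r => (r : ℂ))).PosSemidef :=
    fun i => psd_map_complex (hpsd i)
  refine Matrix.PosSemidef.of_dotProduct_mulVec_nonneg ?_ ?_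
  · ext p q
    have hsym : d q.1 p.1 q.2 = d p.1 q.1 q.2 := sym_of_psd (hpsd q.2) q.1 p.1
    by_cases h : p.2 = q.2
    · simp [Matrix.conjTranspose_apply, Matrix.diagonal_apply, h, hsym]
    · simp [Matrix.conjTranspose_apply, Matrix.diagonal_apply, h, Ne.symm h]
  · intro x
    have key : star x ⬝ᵥ (Matrix.of fun p q : Fin n × Fin m =>
        (Matrix.diagonal fun i => (d p.1 q.1 i : ℂ)) p.2 q.2) *ᵥ x =
        ∑ i : Fin m, star (fun α => x (α, i)) ⬝ᵥ
          ((Matrix.of fun α β => d α β i).map (fun r => (r : ℂ))) *ᵥ (fun α => x (α, i)) := by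
      simp only [dotProduct, Matrix.mulVec, Fintype.sum_prod_type, Matrix.of_apply,
        Matrix.diagonal_apply, Matrix.map_apply, Pi.star_apply]
      simp only [ite_mul, zero_mul, Finset.sum_ite_eq, Finset.mem_univ, if_true]
      rw [Finset.sum_comm]
    rw [key]
    exact Finset.sum_nonneg fun i _ => (hC i).dotProduct_mulVec_nonneg _

/-- the key preservation property, over the reals -/
def Pres (m : ℕ) (g : (Fin m → ℝ) → ℝ) : Prop :=
  ∀ (n : ℕ) (d : Fin n → Fin n → Fin m → ℝ),
    (∀ α β i, 0 ≤ d α β i) →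
    (∀ i, (Matrix.of fun α β => d α β i).PosSemidef) →
    (Matrix.of fun α β => g (d α β)).PosSemidef

lemma sum2_expand {n : ℕ} (F : Fin (n + n) → ℝ) :
    ∑ α, F α = (∑ a, F (finSumFinEquiv (Sum.inl a))) + ∑ a, F (finSumFinEquiv (Sum.inr a)) := by
  rw [← Equiv.sum_comp (finSumFinEquiv : Fin n ⊕ Fin n ≃ Fin (n + n)) F, Fintype.sum_sum_type]

lemma mono_core {m : ℕ} {g : (Fin m → ℝ) → ℝ} (hg : Pres m g) {n : ℕ}
    {d d' : Fin n → Fin n → Fin m → ℝ}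
    (h0 : ∀ α β i, 0 ≤ d α β i) (h0' : ∀ α β i, 0 ≤ d' α β i)
    (hpsd : ∀ i, (Matrix.of fun α β => d α β i).PosSemidef)
    (hdiff : ∀ i, (Matrix.of fun α β => d' α β i - d α β i).PosSemidef)
    (v : Fin n → ℝ) :
    quad (Matrix.of fun α β => g (d α β)) v ≤ quad (Matrix.of fun α β => g (d' α β)) v := by
  classical
  set e : Fin n ⊕ Fin n ≃ Fin (n + n) := finSumFinEquiv with he
  have hsd : ∀ i a b, d a b i = d b a i := fun i a b => sym_of_psd (hpsd i) a b
  have hsc : ∀ i a b, d' a b i - d a b i = d' b a i - d b a i :=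
    fun i a b => sym_of_psd (hdiff i) a b
  have hsd' : ∀ i a b, d' a b i = d' b a i := by
    intro i a b
    have := hsc i a b
    have h2 := hsd i a b
    linarith
  set D : Fin n ⊕ Fin n → Fin n ⊕ Fin n → Fin m → ℝ := fun s t =>
    match s, t with
    | .inl a, .inl b => d' a b
    | .inl a, .inr b => d a b
    | .inr a, .inl b => d a b
    | .inr a, .inr b => d a b with hD
  set d2 : Fin (n + n) → Fin (n + n) → Fin m → ℝ := fun α β => D (e.symm α) (e.symm β) with hd2
  have h02 : ∀ α β i, 0 ≤ d2 α β i := by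
    intro α β i
    rcases hα : e.symm α with a | a <;> rcases hβ : e.symm β with b | b <;>
      simp only [hd2, hD, hα, hβ] <;> first | exact h0 _ _ _ | exact h0' _ _ _
  have hpsd2 : ∀ i, (Matrix.of fun α β => d2 α β i).PosSemidef := by
    intro i
    apply posSemidef_of_quad
    · intro α β
      simp only [Matrix.of_apply, hd2]
      rcases hα : e.symm α with a | a <;> rcases hβ : e.symm β with b | b <;>
        simp [hD, hα, hβ, hsd i, hsd' i]
    · intro x
      have key : quad (Matrix.of fun α β => d2 α β i) x =
          quad (Matrix.of fun a b => d a b i) (fun a => x (e (Sum.inl a)) + x (e (Sum.inr a)))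
          + quad (Matrix.of fun a b => d' a b i - d a b i) (fun a => x (e (Sum.inl a))) := by
        simp only [quad, Matrix.of_apply]
        simp only [sum2_expand]
        simp only [hd2, he, Equiv.symm_apply_apply, hD]
        simp only [← Finset.sum_add_distrib]
        exact Finset.sum_congr rfl fun a _ => Finset.sum_congr rfl fun b _ => by ring
      rw [key]
      exact add_nonneg (quad_nonneg (hpsd i) _) (quad_nonneg (hdiff i) _)
  have hbig := quad_nonneg (hg (n + n) d2 h02 hpsd2)
      (fun α => Sum.elim v (fun a => -v a) (e.symm α))
  have key2 : quad (Matrix.of fun α β => g (d2 α β))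
      (fun α => Sum.elim v (fun a => -v a) (e.symm α)) =
      quad (Matrix.of fun α β => g (d' α β)) v - quad (Matrix.of fun α β => g (d α β)) v := by
    simp only [quad, Matrix.of_apply]
    simp only [sum2_expand]
    simp only [hd2, he, Equiv.symm_apply_apply, hD, Sum.elim_inl, Sum.elim_inr]
    simp only [← Finset.sum_add_distrib, ← Finset.sum_sub_distrib]
    exact Finset.sum_congr rfl fun a _ => Finset.sum_congr rfl fun b _ => by ring
  rw [key2] at hbig
  linarith

/-- a matrix whose entries are a PSD matrix plus a common nonneg constant is PSD -/
lemma psd_add_const {n : ℕ} {d : Fin n → Fin n → ℝ} (hpsd : (Matrix.of d).PosSemidef)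
    {c : ℝ} (hc : 0 ≤ c) : (Matrix.of fun α β => d α β + c).PosSemidef := by
  apply posSemidef_of_quad
  · intro α β
    have := sym_of_psd hpsd α β
    simp only [Matrix.of_apply] at this ⊢
    rw [this]
  · intro x
    have key : quad (Matrix.of fun α β => d α β + c) x =
        quad (Matrix.of d) x + c * ((∑ α, x α) * (∑ β, x β)) := by
      simp only [quad, Matrix.of_apply]
      rw [Finset.sum_mul_sum, Finset.mul_sum, ← Finset.sum_add_distrib]
      refine Finset.sum_congr rfl fun a _ => ?_
      rw [Finset.mul_sum, ← Finset.sum_add_distrib]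
      exact Finset.sum_congr rfl fun b _ => by ring
    rw [key]
    exact add_nonneg (quad_nonneg hpsd x) (mul_nonneg hc (mul_self_nonneg _))

/-- constant nonnegative matrix is PSD -/
lemma psd_const {n : ℕ} {c : ℝ} (hc : 0 ≤ c) : (Matrix.of fun _ _ : Fin n => c).PosSemidef := by
  refine posSemidef_of_quad (fun _ _ => rfl) fun x => ?_
  have key : quad (Matrix.of fun _ _ : Fin n => c) x = c * ((∑ α, x α) * (∑ β, x β)) := by
    simp only [quad, Matrix.of_apply]
    rw [Finset.sum_mul_sum, Finset.mul_sum]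
    refine Finset.sum_congr rfl fun a _ => ?_
    rw [Finset.mul_sum]
    exact Finset.sum_congr rfl fun b _ => by ring
  rw [key]
  exact mul_nonneg hc (mul_self_nonneg _)

lemma contDiff_partialDeriv {m : ℕ} {g : (Fin m → ℝ) → ℝ} (hg : ContDiff ℝ (⊤ : ℕ∞) g) (i : Fin m) :
    ContDiff ℝ (⊤ : ℕ∞) (partialDeriv i g) := by
  unfold partialDeriv
  exact (hg.fderiv_right (by simp)).clm_apply contDiff_const

lemma pres_partialDeriv {m : ℕ} {g : (Fin m → ℝ) → ℝ} (hgsm : ContDiff ℝ (⊤ : ℕ∞) g)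
    (hg : Pres m g) (i : Fin m) : Pres m (partialDeriv i g) := by
  intro n d h0 hpsd
  apply posSemidef_of_quad
  · intro α β
    have hde : d α β = d β α := funext fun j => sym_of_psd (hpsd j) α β
    exact congrArg (partialDeriv i g) hde
  · intro v
    set w : Fin m → ℝ := Pi.single i 1 with hw
    have hw0 : ∀ j, 0 ≤ w j := by
      intro j
      rw [hw, Pi.single_apply]
      split <;> norm_num
    set φ : ℝ → ℝ := fun h => ∑ α, ∑ β, v α * g (d α β + h • w) * v β with hφdef
    set Q : ℝ := ∑ α, ∑ β, v α * partialDeriv i g (d α β) * v β with hQ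
    have hder : HasDerivAt φ Q 0 := by
      apply HasDerivAt.fun_sum
      intro α _
      apply HasDerivAt.fun_sum
      intro β _
      have h1 : HasDerivAt (fun h : ℝ => d α β + h • w) w 0 := by
        simpa using ((hasDerivAt_id (0 : ℝ)).smul_const w).const_add (d α β)
      have h2 : HasFDerivAt g (fderiv ℝ g (d α β)) (d α β + (0 : ℝ) • w) := by
        simpa using (hgsm.differentiable (by simp) (d α β)).hasFDerivAt
      have h3 : HasDerivAt (fun h : ℝ => g (d α β + h • w)) (fderiv ℝ g (d α β) w) 0 :=
        h2.comp_hasDerivAt 0 h1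
      simpa [partialDeriv, hw] using (h3.const_mul (v α)).mul_const (v β)
    have hmono : ∀ h : ℝ, 0 < h → φ 0 ≤ φ h := by
      intro h hh
      set d' : Fin n → Fin n → Fin m → ℝ := fun α β => d α β + h • w with hd'
      have h0' : ∀ α β j, 0 ≤ d' α β j := by
        intro α β j
        simp only [hd', Pi.add_apply, Pi.smul_apply, smul_eq_mul]
        exact add_nonneg (h0 α β j) (mul_nonneg hh.le (hw0 j))
      have hpsd' : ∀ j, (Matrix.of fun α β => d' α β j).PosSemidef := by
        intro j
        have := psd_add_const (d := fun α β => d α β j) (hpsd j)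
          (c := h * w j) (mul_nonneg hh.le (hw0 j))
        convert this using 2
        simp [hd']
      have hdiff : ∀ j, (Matrix.of fun α β => d' α β j - d α β j).PosSemidef := by
        intro j
        have := psd_const (n := n) (c := h * w j) (mul_nonneg hh.le (hw0 j))
        convert this using 2
        all_goals simp [hd', smul_eq_mul]
      have hmc := mono_core hg h0 h0' hpsd hdiff v
      have e1 : φ 0 = quad (Matrix.of fun α β => g (d α β)) v := by
        simp [hφdef, quad]
      have e2 : φ h = quad (Matrix.of fun α β => g (d' α β)) v := by
        simp [hφdef, quad, hd']
      rw [e1, e2]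
      exact hmc
    have hge : 0 ≤ Q := by
      have hsl : Filter.Tendsto (slope φ 0) (𝓝[>] 0) (𝓝 Q) := by
        have := (hder.hasDerivWithinAt (s := Set.Ioi 0))
        rwa [hasDerivWithinAt_iff_tendsto_slope' (by simp)] at this
      refine ge_of_tendsto hsl ?_
      filter_upwards [self_mem_nhdsWithin] with h hh
      rw [slope_def_field]
      have h1 : φ 0 ≤ φ h := hmono h hh
      have h2 : (0 : ℝ) < h := hh
      apply div_nonneg (by linarith) (by linarith)
    have : quad (Matrix.of fun α β => partialDeriv i g (d α β)) v = Q := by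
      simp [quad, hQ]
    rw [this]
    exact hge

end Stmt6Aux


theorem stmt6 (m : ℕ) (f : (Fin m → ℝ) → ℝ)
    (hnn : ∀ x : Fin m → ℝ, (∀ i, 0 ≤ x i) → 0 ≤ f x)
    (hsym : ∀ (σ : Equiv.Perm (Fin m)) (x : Fin m → ℝ), f (x ∘ σ) = f x)
    (hsmooth : ContDiff ℝ (⊤ : ℕ∞) f)
    (hpres : ∀ (n : ℕ) (d : Fin n → Fin n → Fin m → ℝ),
      (∀ α β i, 0 ≤ d α β i) →
      IsPosSemidefBlock (fun α β => Matrix.diagonal fun i => (d α β i : ℂ)) →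
      (Matrix.of fun α β : Fin n => (f (d α β) : ℂ)).PosSemidef) :
    ∀ (l : List (Fin m)) (x : Fin m → ℝ), (∀ i, 0 ≤ x i) →
      0 ≤ mixedPartial l f x := by
  classical
  have hPres : Stmt6Aux.Pres m f := by
    intro n d h0 hpsd
    have hb : IsPosSemidefBlock (fun α β => Matrix.diagonal fun i => (d α β i : ℂ)) :=
      Stmt6Aux.block_psd d hpsd
    have hc := hpres n d h0 hb
    apply Stmt6Aux.posSemidef_of_quad
    · intro α β
      have hde : d α β = d β α := funext fun j => Stmt6Aux.sym_of_psd (hpsd j) α β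
      simp only [Matrix.of_apply, hde]
    · intro v
      have h := hc.dotProduct_mulVec_nonneg (fun α => (v α : ℂ))
      have key : star (fun α => (v α : ℂ)) ⬝ᵥ (Matrix.of fun α β : Fin n => ((f (d α β) : ℝ) : ℂ)) *ᵥ
          (fun α => (v α : ℂ)) =
          ((Stmt6Aux.quad (Matrix.of fun α β => f (d α β)) v : ℝ) : ℂ) := by
        simp only [Stmt6Aux.quad, dotProduct, Matrix.mulVec, Matrix.of_apply, Pi.star_apply,
          RCLike.star_def, Complex.conj_ofReal]
        push_cast
        rw [Finset.sum_congr rfl fun α _ => (Finset.mul_sum _ _ _)]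
        refine Finset.sum_congr rfl fun α _ => Finset.sum_congr rfl fun β _ => ?_
        ring
      rw [key] at h
      exact_mod_cast h
  suffices H : ∀ (l : List (Fin m)) (g : (Fin m → ℝ) → ℝ), ContDiff ℝ (⊤ : ℕ∞) g →
      Stmt6Aux.Pres m g → ∀ x : Fin m → ℝ, (∀ i, 0 ≤ x i) → 0 ≤ mixedPartial l g x by
    intro l x hx
    exact H l f hsmooth hPres x hx
  intro l
  induction l with
  | nil =>
    intro g hc hp x hx
    have h1 : (Matrix.of fun _ _ : Fin 1 => g x).PosSemidef := by
      have := hp 1 (fun _ _ => x) (fun _ _ j => hx j) (fun j => by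
        refine Stmt6Aux.posSemidef_of_quad (fun _ _ => rfl) fun v => ?_
        have key : Stmt6Aux.quad (Matrix.of fun _ _ : Fin 1 => x j) v = x j * (v 0 * v 0) := by
          simp [Stmt6Aux.quad, Fin.sum_univ_one]
          ring
        rw [key]
        exact mul_nonneg (hx j) (mul_self_nonneg _))
      exact this
    have := Stmt6Aux.quad_nonneg h1 (fun _ => 1)
    simpa [Stmt6Aux.quad, mixedPartial] using this
  | cons i l ih =>
    intro g hc hp x hx
    exact ih (partialDeriv i g) (Stmt6Aux.contDiff_partialDeriv hc i)
      (Stmt6Aux.pres_partialDeriv hc hp i) x hx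
end

section
/- If a function g : ℝ≥0^m → ℝ≥0 has all finite differences nonnegative (i.e. g is absolutely monotonic in the multivariate sense), then g extends to a function given by a power series g(x₁,…,x_m) = ∑_{(p₁,…,p_m)∈ℤ≥0^m} a_{p₁,…,p_m} x₁^{p₁}⋯x_m^{p_m} with all a_{p₁,…,p_m} ≥ 0, convergent on ℝ≥0^m. -/
/-- The forward finite difference of `g` in the `i`-th coordinate with step `h`. -/
def finDiff {m : ℕ} (i : Fin m) (h : ℝ) (g : (Fin m → ℝ) → ℝ) : (Fin m → ℝ) → ℝ :=
  fun x => g (x + h • (Pi.single i 1 : Fin m → ℝ)) - g x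

/-- Iterated mixed finite differences along a list of (direction, step) pairs. -/
def iterFinDiff {m : ℕ} : List (Fin m × ℝ) → ((Fin m → ℝ) → ℝ) → ((Fin m → ℝ) → ℝ)
  | [], g => g
  | (i, h) :: l, g => iterFinDiff l (finDiff i h g)

/-!
Translations act on functions `ℝᵐ → ℝ`, hence so does the commutative group algebra `ℝ[ℝᵐ]`,
in which the difference operator along `eᵢ` with step `h` is `δᵢ = [h eᵢ] - 1`. Absolute
monotonicity of `g` says that every element of the semiring generated by the `δᵢ` with positive
steps maps `g` to a function that is nonnegative on the orthant, so the inequalities needed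
reduce to identities in `ℝ[ℝᵐ]`. From `δᵢ(2h) = δᵢ(h) (2 + δᵢ(h))`, the difference quotients
`Δₕᵖ g(0) / (p! h^|p|)` decrease as `h` is halved, so they converge to some `a_p ≥ 0`. Newton's
formula `[h q] = ∏ᵢ (1 + δᵢ)^qᵢ = ∑_{p ≤ q} C(q, p) Δₕᵖ` expresses `g` at grid points in terms of
these quotients. Comparing `g x` with the values at the grid points just below and just above `x`
and letting `h → 0` gives `∑ a_p xᵖ ≤ g x`, and the reverse inequality up to a tail
`2^-(K+1) g(2x + 2)`; the tail is controlled through `2^|p| C(q, p) ≤ C(2q, p)`.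
-/

open Finset AddMonoidAlgebra Filter Topology

noncomputable section

lemma Subsemiring.prod_sub_prod_mem {R ι : Type*} [CommRing R] (S : Subsemiring R)
    (s : Finset ι) {a b : ι → R} (ha : ∀ i ∈ s, a i ∈ S) (hab : ∀ i ∈ s, b i - a i ∈ S) :
    ∏ i ∈ s, b i - ∏ i ∈ s, a i ∈ S := by
  classical
  induction s using Finset.induction_on with
  | empty => simp
  | insert j s hj ih =>
    have hb : b j ∈ S := by
      simpa using S.add_mem (hab j (mem_insert_self j s)) (ha j (mem_insert_self j s))
    rw [prod_insert hj, prod_insert hj,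
      show b j * ∏ i ∈ s, b i - a j * ∏ i ∈ s, a i =
        b j * (∏ i ∈ s, b i - ∏ i ∈ s, a i) + (b j - a j) * ∏ i ∈ s, a i by ring]
    exact S.add_mem
      (S.mul_mem hb (ih (fun i hi => ha i (mem_insert_of_mem hi))
        fun i hi => hab i (mem_insert_of_mem hi)))
      (S.mul_mem (hab j (mem_insert_self j s)) (S.prod_mem fun i hi => ha i (mem_insert_of_mem hi)))

lemma Subsemiring.pow_sub_pow_mem {R : Type*} [CommRing R] (S : Subsemiring R) {a b : R}
    (ha : a ∈ S) (hab : b - a ∈ S) (n : ℕ) : b ^ n - a ^ n ∈ S := by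
  simpa using S.prod_sub_prod_mem (range n) (fun _ _ => ha) fun _ _ => hab

lemma Nat.two_pow_mul_descFactorial_le (n k : ℕ) :
    2 ^ k * n.descFactorial k ≤ (2 * n).descFactorial k := by
  induction k with
  | zero => simp
  | succ k ih =>
    rw [Nat.descFactorial_succ, Nat.descFactorial_succ, pow_succ]
    calc 2 ^ k * 2 * ((n - k) * n.descFactorial k)
        = (2 * (n - k)) * (2 ^ k * n.descFactorial k) := by ring
      _ ≤ (2 * n - k) * (2 * n).descFactorial k := by gcongr; omega

lemma tendsto_half_pow : Tendsto (fun n : ℕ => (1 / 2 : ℝ) ^ n) atTop (𝓝 0) :=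
  tendsto_pow_atTop_nhds_zero_of_lt_one (by norm_num) (by norm_num)

lemma natFloor_div_mul_le {x h : ℝ} (hx : 0 ≤ x) (hh : 0 < h) : ⌊x / h⌋₊ * h ≤ x :=
  (le_div_iff₀ hh).1 (Nat.floor_le (div_nonneg hx hh.le))

lemma le_natCeil_div_mul (x : ℝ) {h : ℝ} (hh : 0 < h) : x ≤ ⌈x / h⌉₊ * h :=
  (div_le_iff₀ hh).1 (Nat.le_ceil _)

lemma natCeil_div_mul_le {x h : ℝ} (hx : 0 ≤ x) (hh : 0 < h) : ⌈x / h⌉₊ * h ≤ x + h := by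
  have := mul_lt_mul_of_pos_right (Nat.ceil_lt_add_one (div_nonneg hx hh.le)) hh
  rw [add_mul, one_mul, div_mul_cancel₀ _ hh.ne'] at this
  exact this.le

lemma tendsto_natFloor_div_sub_mul {ι : Type*} {l : Filter ι} {h : ι → ℝ} (hh : ∀ n, 0 < h n)
    (hlim : Tendsto h l (𝓝 0)) {x : ℝ} (hx : 0 ≤ x) (k : ℕ) :
    Tendsto (fun n => ((⌊x / h n⌋₊ - k : ℕ) : ℝ) * h n) l (𝓝 x) := by
  have hlower : Tendsto (fun n => x - (k + 1) * h n) l (𝓝 x) := by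
    simpa using tendsto_const_nhds.sub (hlim.const_mul ((k : ℝ) + 1))
  refine tendsto_of_tendsto_of_tendsto_of_le_of_le hlower tendsto_const_nhds (fun n => ?_)
    fun n => ?_
  · have hsub : (⌊x / h n⌋₊ : ℝ) ≤ ((⌊x / h n⌋₊ - k : ℕ) : ℝ) + k := by
      exact_mod_cast le_tsub_add
    have hfloor := Nat.sub_one_lt_floor (x / h n)
    have hx_eq : x = x / h n * h n := (div_mul_cancel₀ x (hh n).ne').symm
    nlinarith [hh n]
  · calc ((⌊x / h n⌋₊ - k : ℕ) : ℝ) * h n ≤ ⌊x / h n⌋₊ * h n :=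
          mul_le_mul_of_nonneg_right (by exact_mod_cast Nat.sub_le _ _) (hh n).le
      _ ≤ x := natFloor_div_mul_le hx (hh n)

lemma Iic_eq_piFinset_range {ι : Type*} [Fintype ι] [DecidableEq ι] (q : ι → ℕ) :
    Iic q = Fintype.piFinset fun i => range (q i + 1) := by
  ext p; simp [Pi.le_def]

namespace FiniteDiff

variable {m : ℕ}

def translate : Multiplicative (Fin m → ℝ) →* Module.End ℝ ((Fin m → ℝ) → ℝ) where
  toFun v := LinearMap.funLeft ℝ ℝ (· + v.toAdd)
  map_one' := by ext; simp
  map_mul' v w := by ext F x; simp [add_assoc]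

def act : ℝ[Fin m → ℝ] →ₐ[ℝ] Module.End ℝ ((Fin m → ℝ) → ℝ) :=
  lift ℝ _ _ translate

@[simp]
lemma act_single (v : Fin m → ℝ) (c : ℝ) (F : (Fin m → ℝ) → ℝ) (x : Fin m → ℝ) :
    act (single v c) F x = c * F (x + v) := by
  simp [act, translate]

lemma act_natCast_mul_apply (n : ℕ) (μ : ℝ[Fin m → ℝ]) (F : (Fin m → ℝ) → ℝ) (x : Fin m → ℝ) :
    act ((n : ℝ[Fin m → ℝ]) * μ) F x = n * act μ F x := by
  simp [Module.End.natCast_apply]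

def diffOp (i : Fin m) (h : ℝ) : ℝ[Fin m → ℝ] := single (h • Pi.single i 1) 1 - 1

lemma act_diffOp (i : Fin m) (h : ℝ) (F : (Fin m → ℝ) → ℝ) :
    act (diffOp i h) F = finDiff i h F := by
  ext x; simp [diffOp, finDiff]

lemma diffOp_zero (i : Fin m) : diffOp i 0 = 0 := by simp [diffOp, one_def]

lemma diffOp_two_mul (i : Fin m) (h : ℝ) :
    diffOp i (2 * h) = diffOp i h * (2 + diffOp i h) := by
  have hsq : single ((2 * h) • Pi.single i 1 : Fin m → ℝ) (1 : ℝ) =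
      single (h • Pi.single i 1) 1 ^ 2 := by
    rw [single_pow, mul_smul, two_smul ℝ, two_nsmul, one_pow]
  rw [diffOp, diffOp, hsq]
  ring

lemma iterFinDiff_eq_act (l : List (Fin m × ℝ)) (F : (Fin m → ℝ) → ℝ) :
    iterFinDiff l F = act (l.map fun q => diffOp q.1 q.2).prod F := by
  induction l generalizing F with
  | nil => simp [iterFinDiff]
  | cons q l ih =>
    obtain ⟨i, h⟩ := q
    rw [iterFinDiff, ih, List.map_cons, List.prod_cons, mul_comm, map_mul, Module.End.mul_apply,
      act_diffOp]

def multiDiffOp (h : ℝ) (p : Fin m → ℕ) : ℝ[Fin m → ℝ] := ∏ i, diffOp i h ^ p i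

/-- Newton's forward difference formula. -/
lemma single_smul_eq_sum (h : ℝ) (q : Fin m → ℕ) :
    single (h • fun i => (q i : ℝ)) (1 : ℝ) =
      ∑ p ∈ Iic q, ((∏ i, (q i).choose (p i) : ℕ) : ℝ[Fin m → ℝ]) * multiDiffOp h p := by
  have hq : (h • fun i => (q i : ℝ)) = ∑ i, q i • (h • Pi.single i 1 : Fin m → ℝ) := by
    ext j; simp [Finset.sum_apply, Pi.single_apply, mul_comm]
  have hprod : single (∑ i, q i • (h • Pi.single i 1 : Fin m → ℝ)) (1 : ℝ) =
      ∏ i, single (h • Pi.single i 1 : Fin m → ℝ) (1 : ℝ) ^ q i := by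
    simp only [single_pow, one_pow, prod_single, prod_const_one]
  have hbinom (i : Fin m) : single (h • Pi.single i 1 : Fin m → ℝ) (1 : ℝ) ^ q i =
      ∑ k ∈ range (q i + 1), ((q i).choose k : ℝ[Fin m → ℝ]) * diffOp i h ^ k := by
    rw [← sub_add_cancel (single _ _) 1, ← diffOp, add_pow]
    simp [mul_comm]
  rw [hq, hprod, prod_congr rfl fun i _ => hbinom i, prod_univ_sum, ← Iic_eq_piFinset_range]
  refine sum_congr rfl fun p _ => ?_
  rw [prod_mul_distrib, multiDiffOp, Nat.cast_prod]

def posCone (m : ℕ) : Subsemiring ℝ[Fin m → ℝ] :=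
  Subsemiring.closure {μ | ∃ i h, 0 < h ∧ diffOp i h = μ}

lemma diffOp_mem_posCone (i : Fin m) {h : ℝ} (hh : 0 ≤ h) : diffOp i h ∈ posCone m := by
  rcases hh.eq_or_lt with rfl | hh
  · simp [diffOp_zero]
  · exact Subsemiring.subset_closure ⟨i, h, hh, rfl⟩

lemma multiDiffOp_mem_posCone {h : ℝ} (hh : 0 ≤ h) (p : Fin m → ℕ) :
    multiDiffOp h p ∈ posCone m :=
  prod_mem fun i _ => pow_mem (diffOp_mem_posCone i hh) _

lemma multiDiffOp_two_mul_sub_mem {h : ℝ} (hh : 0 ≤ h) (p : Fin m → ℕ) :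
    multiDiffOp (2 * h) p - ((2 ^ (∑ i, p i) : ℕ) : ℝ[Fin m → ℝ]) * multiDiffOp h p ∈
      posCone m := by
  have hpow : ((2 ^ (∑ i, p i) : ℕ) : ℝ[Fin m → ℝ]) * multiDiffOp h p =
      ∏ i, (2 * diffOp i h) ^ p i := by
    simp only [multiDiffOp, mul_pow, prod_mul_distrib, prod_pow_eq_pow_sum, Nat.cast_pow,
      Nat.cast_ofNat]
  rw [hpow, multiDiffOp]
  refine (posCone m).prod_sub_prod_mem _ (fun i _ => ?_) fun i _ => ?_
  · exact pow_mem (mul_mem (ofNat_mem _ 2) (diffOp_mem_posCone i hh)) _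
  · rw [diffOp_two_mul, mul_pow, mul_pow, mul_comm (2 ^ p i), ← mul_sub]
    refine mul_mem (pow_mem (diffOp_mem_posCone i hh) _) ?_
    refine (posCone m).pow_sub_pow_mem (ofNat_mem _ 2) ?_ _
    simpa using diffOp_mem_posCone i hh

lemma single_sub_one_mem_posCone {v : Fin m → ℝ} (hv : ∀ i, 0 ≤ v i) :
    single v (1 : ℝ) - 1 ∈ posCone m := by
  have hv' : single v (1 : ℝ) = ∏ i, single (v i • Pi.single i 1 : Fin m → ℝ) 1 := by
    rw [prod_single, prod_const_one]
    congr
    ext j; simp [Finset.sum_apply, Pi.single_apply]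
  have key := (posCone m).prod_sub_prod_mem univ (a := fun _ => 1)
    (b := fun i => single (v i • Pi.single i 1 : Fin m → ℝ) (1 : ℝ)) (fun _ _ => one_mem _)
    fun i _ => diffOp_mem_posCone i (hv i)
  rwa [prod_const_one, ← hv'] at key

def IsAbsMonotone (F : (Fin m → ℝ) → ℝ) : Prop :=
  ∀ l : List (Fin m × ℝ), (∀ q ∈ l, 0 < q.2) → ∀ x : Fin m → ℝ, (∀ i, 0 ≤ x i) →
    0 ≤ iterFinDiff l F x

def diffQuotient (F : (Fin m → ℝ) → ℝ) (h : ℝ) (p : Fin m → ℕ) : ℝ :=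
  act (multiDiffOp h p) F 0 / ∏ i, ((p i).factorial * h ^ p i)

def coeff (F : (Fin m → ℝ) → ℝ) (p : Fin m → ℕ) : ℝ := ⨅ n : ℕ, diffQuotient F ((1 / 2) ^ n) p

def newtonTerm (F : (Fin m → ℝ) → ℝ) (h : ℝ) (q p : Fin m → ℕ) : ℝ :=
  (∏ i, (q i).choose (p i) : ℕ) * act (multiDiffOp h p) F 0

lemma hasSum_newtonTerm (F : (Fin m → ℝ) → ℝ) (h : ℝ) (q : Fin m → ℕ) :
    HasSum (newtonTerm F h q) (F (h • fun i => (q i : ℝ))) := by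
  have hzero : ∀ p ∉ Iic q, newtonTerm F h q p = 0 := by
    intro p hp
    obtain ⟨i, hi⟩ : ∃ i, q i < p i := by simpa [Pi.le_def] using hp
    rw [newtonTerm, prod_eq_zero (mem_univ i) (Nat.choose_eq_zero_of_lt hi), Nat.cast_zero,
      zero_mul]
  have hvalue : F (h • fun i => (q i : ℝ)) = ∑ p ∈ Iic q, newtonTerm F h q p := by
    simpa only [map_sum, LinearMap.sum_apply, Finset.sum_apply, act_natCast_mul_apply, act_single,
      zero_add, one_mul, newtonTerm] using
      congr_arg (fun μ => act μ F 0) (single_smul_eq_sum h q)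
  rw [hvalue]
  exact hasSum_sum_of_ne_finset_zero hzero

lemma newtonTerm_eq {F : (Fin m → ℝ) → ℝ} {h : ℝ} (hh : h ≠ 0) (q p : Fin m → ℕ) :
    newtonTerm F h q p = diffQuotient F h p * ∏ i, ((q i).descFactorial (p i) * h ^ p i) := by
  have hden : ∏ i, ((p i).factorial * h ^ p i : ℝ) ≠ 0 :=
    prod_ne_zero_iff.2 fun i _ => mul_ne_zero (by positivity) (pow_ne_zero _ hh)
  simp only [diffQuotient, Nat.descFactorial_eq_factorial_mul_choose, newtonTerm]
  field_simp
  push_cast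
  simp only [prod_mul_distrib]
  ring

namespace IsAbsMonotone

variable {F G : (Fin m → ℝ) → ℝ}

lemma nonneg (hF : IsAbsMonotone F) {x : Fin m → ℝ} (hx : ∀ i, 0 ≤ x i) : 0 ≤ F x :=
  hF [] (by simp) x hx

lemma zero : IsAbsMonotone (0 : (Fin m → ℝ) → ℝ) := by
  intro l _ x _
  simp [iterFinDiff_eq_act]

lemma add (hF : IsAbsMonotone F) (hG : IsAbsMonotone G) : IsAbsMonotone (F + G) := by
  intro l hl x hx
  simpa [iterFinDiff_eq_act] using add_nonneg (hF l hl x hx) (hG l hl x hx)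

lemma finDiff (hF : IsAbsMonotone F) (i : Fin m) {h : ℝ} (hh : 0 < h) :
    IsAbsMonotone (finDiff i h F) := by
  intro l hl x hx
  exact hF ((i, h) :: l) (by simpa [hh] using hl) x hx

lemma act_of_mem (hF : IsAbsMonotone F) {μ : ℝ[Fin m → ℝ]} (hμ : μ ∈ posCone m) :
    IsAbsMonotone (act μ F) := by
  induction hμ using Subsemiring.closure_induction generalizing F with
  | mem μ hμ =>
    obtain ⟨i, h, hh, rfl⟩ := hμ
    simpa [act_diffOp] using hF.finDiff i hh
  | zero => simpa using zero
  | one => simpa using hF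
  | add μ ν _ _ ihμ ihν => simpa using (ihμ hF).add (ihν hF)
  | mul μ ν _ _ ihμ ihν => simpa using ihμ (ihν hF)

lemma act_nonneg (hF : IsAbsMonotone F) {μ : ℝ[Fin m → ℝ]} (hμ : μ ∈ posCone m)
    {x : Fin m → ℝ} (hx : ∀ i, 0 ≤ x i) : 0 ≤ act μ F x :=
  (hF.act_of_mem hμ).nonneg hx

lemma monotoneOn (hF : IsAbsMonotone F) : MonotoneOn F (Set.Ici 0) := by
  intro x hx y _ hxy
  simpa using hF.act_nonneg (single_sub_one_mem_posCone (v := y - x) (sub_nonneg.2 hxy)) hx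

variable (hF : IsAbsMonotone F)
include hF

lemma act_multiDiffOp_nonneg {h : ℝ} (hh : 0 ≤ h) (p : Fin m → ℕ) :
    0 ≤ act (multiDiffOp h p) F 0 :=
  hF.act_nonneg (multiDiffOp_mem_posCone hh p) fun _ => le_rfl

lemma diffQuotient_nonneg {h : ℝ} (hh : 0 ≤ h) (p : Fin m → ℕ) : 0 ≤ diffQuotient F h p :=
  div_nonneg (hF.act_multiDiffOp_nonneg hh p) (prod_nonneg fun i _ => by positivity)

lemma newtonTerm_nonneg {h : ℝ} (hh : 0 ≤ h) (q p : Fin m → ℕ) : 0 ≤ newtonTerm F h q p :=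
  mul_nonneg (Nat.cast_nonneg _) (hF.act_multiDiffOp_nonneg hh p)

lemma diffQuotient_le_two_mul {h : ℝ} (hh : 0 < h) (p : Fin m → ℕ) :
    diffQuotient F h p ≤ diffQuotient F (2 * h) p := by
  have hle : 2 ^ (∑ i, p i) * act (multiDiffOp h p) F 0 ≤ act (multiDiffOp (2 * h) p) F 0 := by
    have := hF.act_nonneg (multiDiffOp_two_mul_sub_mem hh.le p) fun _ => le_rfl
    rwa [map_sub, LinearMap.sub_apply, Pi.sub_apply, act_natCast_mul_apply, sub_nonneg,
      Nat.cast_pow, Nat.cast_ofNat] at this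
  have hden : ∏ i, ((p i).factorial * (2 * h) ^ p i : ℝ) =
      2 ^ (∑ i, p i) * ∏ i, ((p i).factorial * h ^ p i : ℝ) := by
    simp only [mul_pow, prod_mul_distrib, prod_pow_eq_pow_sum]
    ring
  rw [diffQuotient, diffQuotient, hden,
    ← mul_div_mul_left _ _ (pow_ne_zero (∑ i, p i) two_ne_zero)]
  gcongr

lemma antitone_diffQuotient (p : Fin m → ℕ) :
    Antitone fun n : ℕ => diffQuotient F ((1 / 2) ^ n) p := by
  refine antitone_nat_of_succ_le fun n => ?_
  have := hF.diffQuotient_le_two_mul (h := (1 / 2) ^ (n + 1)) (by positivity) p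
  rwa [show 2 * (1 / 2 : ℝ) ^ (n + 1) = (1 / 2) ^ n by ring] at this

lemma coeff_nonneg (p : Fin m → ℕ) : 0 ≤ coeff F p :=
  le_ciInf fun _ => hF.diffQuotient_nonneg (by positivity) p

lemma tendsto_diffQuotient (p : Fin m → ℕ) :
    Tendsto (fun n : ℕ => diffQuotient F ((1 / 2) ^ n) p) atTop (𝓝 (coeff F p)) :=
  tendsto_atTop_ciInf (hF.antitone_diffQuotient p)
    ⟨0, by rintro _ ⟨n, rfl⟩; exact hF.diffQuotient_nonneg (by positivity) p⟩

lemma le_newtonTerm {h : ℝ} (hh : 0 < h) (q p : Fin m → ℕ) :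
    diffQuotient F h p * ∏ i, (((q i - p i : ℕ) : ℝ) * h) ^ p i ≤ newtonTerm F h q p := by
  rw [newtonTerm_eq hh.ne']
  refine mul_le_mul_of_nonneg_left (prod_le_prod (fun i _ => by positivity) fun i _ => ?_)
    (hF.diffQuotient_nonneg hh.le p)
  rw [mul_pow]
  gcongr
  exact_mod_cast (Nat.pow_le_pow_left (by omega) _).trans (Nat.pow_sub_le_descFactorial _ _)

lemma newtonTerm_le {h : ℝ} (hh : 0 < h) (q p : Fin m → ℕ) :
    newtonTerm F h q p ≤ diffQuotient F h p * ∏ i, ((q i : ℝ) * h) ^ p i := by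
  rw [newtonTerm_eq hh.ne']
  refine mul_le_mul_of_nonneg_left (prod_le_prod (fun i _ => by positivity) fun i _ => ?_)
    (hF.diffQuotient_nonneg hh.le p)
  rw [mul_pow]
  gcongr
  exact_mod_cast Nat.descFactorial_le_pow _ _

lemma two_pow_mul_newtonTerm_le {h : ℝ} (hh : 0 < h) (q p : Fin m → ℕ) :
    2 ^ (∑ i, p i) * newtonTerm F h q p ≤ newtonTerm F h (2 * q) p := by
  rw [newtonTerm_eq hh.ne', newtonTerm_eq hh.ne', mul_left_comm, ← prod_pow_eq_pow_sum,
    ← prod_mul_distrib]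
  refine mul_le_mul_of_nonneg_left (prod_le_prod (fun i _ => by positivity) fun i _ => ?_)
    (hF.diffQuotient_nonneg hh.le p)
  rw [← mul_assoc]
  gcongr
  exact_mod_cast Nat.two_pow_mul_descFactorial_le _ _

lemma newtonTerm_le_add {h : ℝ} (hh : 0 < h) {q : Fin m → ℕ} {y : Fin m → ℝ}
    (hqy : ∀ i, (q i : ℝ) * h ≤ y i) (K : ℕ) (p : Fin m → ℕ) :
    newtonTerm F h q p ≤
      (if p ∈ Iic (fun _ => K) then diffQuotient F h p * ∏ i, y i ^ p i else 0) +
        (1 / 2) ^ (K + 1) * newtonTerm F h (2 * q) p := by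
  split_ifs with hp
  · refine le_add_of_le_of_nonneg ((hF.newtonTerm_le hh q p).trans ?_)
      (mul_nonneg (by positivity) (hF.newtonTerm_nonneg hh.le _ _))
    refine mul_le_mul_of_nonneg_left (prod_le_prod (fun i _ => by positivity) fun i _ => ?_)
      (hF.diffQuotient_nonneg hh.le p)
    exact pow_le_pow_left₀ (by positivity) (hqy i) _
  · obtain ⟨i, hi⟩ : ∃ i, K < p i := by simpa [Pi.le_def] using hp
    have hK : K + 1 ≤ ∑ i, p i :=
      hi.trans_le (single_le_sum (fun j _ => Nat.zero_le (p j)) (mem_univ i))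
    calc newtonTerm F h q p = (1 / 2) ^ (∑ i, p i) * (2 ^ (∑ i, p i) * newtonTerm F h q p) := by
          rw [← mul_assoc, ← mul_pow]; norm_num
      _ ≤ (1 / 2) ^ (K + 1) * newtonTerm F h (2 * q) p :=
          mul_le_mul (pow_le_pow_of_le_one (by norm_num) (by norm_num) hK)
            (hF.two_pow_mul_newtonTerm_le hh q p)
            (mul_nonneg (by positivity) (hF.newtonTerm_nonneg hh.le _ _)) (by positivity)
      _ = 0 + _ := (zero_add _).symm

lemma sum_diffQuotient_mul_le {h : ℝ} (hh : 0 < h) {x : Fin m → ℝ} (hx : ∀ i, 0 ≤ x i)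
    (S : Finset (Fin m → ℕ)) :
    ∑ p ∈ S, diffQuotient F h p * ∏ i, (((⌊x i / h⌋₊ - p i : ℕ) : ℝ) * h) ^ p i ≤ F x := by
  set q : Fin m → ℕ := fun i => ⌊x i / h⌋₊
  calc _ ≤ ∑ p ∈ S, newtonTerm F h q p := sum_le_sum fun p _ => hF.le_newtonTerm hh _ _
    _ ≤ F (h • fun i => (q i : ℝ)) :=
      sum_le_hasSum S (fun p _ => hF.newtonTerm_nonneg hh.le _ _) (hasSum_newtonTerm _ _ _)
    _ ≤ F x := hF.monotoneOn (fun i => mul_nonneg hh.le (Nat.cast_nonneg _)) hx fun i => by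
      simpa [mul_comm] using natFloor_div_mul_le (hx i) hh

lemma le_sum_diffQuotient_mul_add {h : ℝ} (hh : 0 < h) (hh1 : h ≤ 1) {x : Fin m → ℝ}
    (hx : ∀ i, 0 ≤ x i) (K : ℕ) :
    F x ≤ ∑ p ∈ Iic (fun _ => K), diffQuotient F h p * ∏ i, (x i + h) ^ p i +
      (1 / 2) ^ (K + 1) * F (fun i => 2 * x i + 2) := by
  set q : Fin m → ℕ := fun i => ⌈x i / h⌉₊
  have hqx (i : Fin m) : (q i : ℝ) * h ≤ x i + h := natCeil_div_mul_le (hx i) hh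
  have hbound : HasSum (fun p => (if p ∈ Iic (fun _ => K) then
        diffQuotient F h p * ∏ i, (x i + h) ^ p i else 0) +
        (1 / 2) ^ (K + 1) * newtonTerm F h (2 * q) p)
      (∑ p ∈ Iic (fun _ => K), diffQuotient F h p * ∏ i, (x i + h) ^ p i +
        (1 / 2) ^ (K + 1) * F (h • fun i => ((2 * q) i : ℝ))) := by
    refine HasSum.add ?_ ((hasSum_newtonTerm _ _ _).mul_left _)
    rw [← sum_congr rfl fun p hp => if_pos hp]
    exact hasSum_sum_of_ne_finset_zero fun p hp => if_neg hp
  calc F x ≤ F (h • fun i => (q i : ℝ)) :=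
        hF.monotoneOn hx (fun i => mul_nonneg hh.le (Nat.cast_nonneg _)) fun i => by
          simpa [mul_comm] using le_natCeil_div_mul (x i) hh
    _ ≤ _ := hasSum_le (hF.newtonTerm_le_add hh hqx K) (hasSum_newtonTerm _ _ _) hbound
    _ ≤ _ := by
      gcongr
      refine hF.monotoneOn (fun i => mul_nonneg hh.le (Nat.cast_nonneg _))
        (fun i => show (0 : ℝ) ≤ 2 * x i + 2 by linarith [hx i]) fun i => ?_
      simp only [Pi.mul_apply, Pi.ofNat_apply, Nat.cast_mul, Nat.cast_ofNat]
      nlinarith [hqx i]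

lemma sum_coeff_mul_prod_pow_le {x : Fin m → ℝ} (hx : ∀ i, 0 ≤ x i) (S : Finset (Fin m → ℕ)) :
    ∑ p ∈ S, coeff F p * ∏ i, x i ^ p i ≤ F x := by
  have hh (n : ℕ) : (0 : ℝ) < (1 / 2) ^ n := by positivity
  refine le_of_tendsto' (tendsto_finsetSum _ fun p _ => (hF.tendsto_diffQuotient p).mul <|
    tendsto_finsetProd _ fun i _ => ?_) fun n => hF.sum_diffQuotient_mul_le (hh n) hx S
  exact (tendsto_natFloor_div_sub_mul hh tendsto_half_pow (hx i) (p i)).pow _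

lemma le_sum_coeff_mul_prod_pow_add {x : Fin m → ℝ} (hx : ∀ i, 0 ≤ x i) (K : ℕ) :
    F x ≤ ∑ p ∈ Iic (fun _ => K), coeff F p * ∏ i, x i ^ p i +
      (1 / 2) ^ (K + 1) * F (fun i => 2 * x i + 2) := by
  refine ge_of_tendsto' ((tendsto_finsetSum _ fun p _ => (hF.tendsto_diffQuotient p).mul <|
    tendsto_finsetProd _ fun i _ => ?_).add_const _) fun n =>
      hF.le_sum_diffQuotient_mul_add (by positivity) (pow_le_one₀ (by norm_num) (by norm_num)) hx K
  simpa using ((tendsto_const_nhds (x := x i)).add tendsto_half_pow).pow (p i)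

lemma hasSum_coeff_mul_prod_pow {x : Fin m → ℝ} (hx : ∀ i, 0 ≤ x i) :
    HasSum (fun p => coeff F p * ∏ i, x i ^ p i) (F x) := by
  have hnonneg (p : Fin m → ℕ) : 0 ≤ coeff F p * ∏ i, x i ^ p i :=
    mul_nonneg (hF.coeff_nonneg p) (prod_nonneg fun i _ => pow_nonneg (hx i) _)
  have hsum : Summable fun p => coeff F p * ∏ i, x i ^ p i :=
    summable_of_sum_le hnonneg (hF.sum_coeff_mul_prod_pow_le hx)
  refine le_antisymm (hsum.tsum_le_of_sum_le (hF.sum_coeff_mul_prod_pow_le hx)) ?_ ▸ hsum.hasSum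
  have hlim : Tendsto (fun K : ℕ => ∑' p, coeff F p * ∏ i, x i ^ p i +
      (1 / 2) ^ (K + 1) * F (fun i => 2 * x i + 2)) atTop
      (𝓝 (∑' p, coeff F p * ∏ i, x i ^ p i)) := by
    simpa using tendsto_const_nhds.add
      ((tendsto_half_pow.comp (tendsto_add_atTop_nat 1)).mul_const (F fun i => 2 * x i + 2))
  refine ge_of_tendsto' hlim fun K => (hF.le_sum_coeff_mul_prod_pow_add hx K).trans ?_
  gcongr
  exact hsum.sum_le_tsum _ fun p _ => hnonneg p

end IsAbsMonotone

end FiniteDiff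

theorem stmt9_general (m : ℕ) (g : (Fin m → ℝ) → ℝ)
    (hdiff : ∀ l : List (Fin m × ℝ), (∀ q ∈ l, 0 < q.2) →
      ∀ x : Fin m → ℝ, (∀ i, 0 ≤ x i) → 0 ≤ iterFinDiff l g x) :
    ∃ a : (Fin m → ℕ) → ℝ, (∀ p, 0 ≤ a p) ∧
      ∀ x : Fin m → ℝ, (∀ i, 0 ≤ x i) →
        HasSum (fun p : Fin m → ℕ => a p * ∏ i, x i ^ p i) (g x) := by
  have hg : FiniteDiff.IsAbsMonotone g := hdiff
  exact ⟨FiniteDiff.coeff g, hg.coeff_nonneg, fun _ => hg.hasSum_coeff_mul_prod_pow⟩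

theorem stmt9 (m : ℕ) (g : (Fin m → ℝ) → ℝ)
    (hnn : ∀ x : Fin m → ℝ, (∀ i, 0 ≤ x i) → 0 ≤ g x)
    (hdiff : ∀ l : List (Fin m × ℝ), (∀ q ∈ l, 0 < q.2) →
      ∀ x : Fin m → ℝ, (∀ i, 0 ≤ x i) → 0 ≤ iterFinDiff l g x) :
    ∃ a : (Fin m → ℕ) → ℝ, (∀ p, 0 ≤ a p) ∧
      ∀ x : Fin m → ℝ, (∀ i, 0 ≤ x i) →
        HasSum (fun p : Fin m → ℕ => a p * ∏ i, x i ^ p i) (g x) :=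
  stmt9_general m g hdiff
end
end

section
/- If (A_{αβ})_{α,β=1,…,n} is a positive semidefinite n×n block matrix whose blocks A_{αβ} are m×m complex matrices, then the n×n scalar matrix (det A_{αβ})_{α,β=1,…,n} is positive semidefinite. -/
/-!
Write the block matrix as a Gram matrix, `A_{αβ} = N_αᴴ N_β` with `N_α` of size `mn × m`.
A symmetrised Cauchy–Binet formula, `m! · det (Cᴴ D) = ∑_f conj (det C_f) · det D_f` with `f`
ranging over all maps from the `m` columns to the rows and `C_f` the square matrix of the rows
`f 1, …, f m`, then exhibits `m! · (det A_{αβ})` as the Gram matrix of the vectors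
`(det (N_α)_f)_f`, which is positive semidefinite.
-/

open Matrix
open scoped ComplexOrder

namespace Matrix

open Equiv Finset

section CauchyBinet

variable {R κ ι : Type*} [CommRing R] [Fintype κ] [Fintype ι] [DecidableEq ι]

theorem det_transpose_mul_eq_sum_det_submatrix_mul_prod (E D : Matrix κ ι R) :
    det (Eᵀ * D) = ∑ f : ι → κ, det (E.submatrix f id) * ∏ i, D (f i) i := by
  rw [det_apply']
  simp_rw [mul_apply, transpose_apply, Fintype.prod_sum, mul_sum]
  rw [sum_comm]
  refine sum_congr rfl fun f _ => ?_
  simp_rw [prod_mul_distrib, ← mul_assoc]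
  rw [← sum_mul, ← det_transpose, det_apply']
  simp [transpose_apply, submatrix_apply]

/-- Each permutation `σ` of the columns contributes the same sum, after substituting `f ∘ σ`
for `f`; this is where the factor `(card ι)!` comes from. -/
theorem sum_det_submatrix_mul_det_submatrix (E D : Matrix κ ι R) :
    ∑ f : ι → κ, det (E.submatrix f id) * det (D.submatrix f id)
      = (Fintype.card ι).factorial * ∑ f : ι → κ, det (E.submatrix f id) * ∏ i, D (f i) i := by
  have reindex (σ : Perm ι) :
      ∑ f : ι → κ, det (E.submatrix f id) * (Perm.sign σ * ∏ i, D (f (σ i)) i)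
        = ∑ f : ι → κ, det (E.submatrix f id) * ∏ i, D (f i) i := by
    refine Fintype.sum_equiv (σ.symm.arrowCongr (Equiv.refl κ)) _ _ fun f => ?_
    have hcomp : σ.symm.arrowCongr (Equiv.refl κ) f = f ∘ σ := rfl
    have hperm : E.submatrix (f ∘ σ) id = (E.submatrix f id).submatrix σ id := rfl
    rw [hcomp, hperm, det_permute, Function.comp_def]
    ring
  calc ∑ f : ι → κ, det (E.submatrix f id) * det (D.submatrix f id)
      = ∑ f : ι → κ, ∑ σ : Perm ι,
          det (E.submatrix f id) * (Perm.sign σ * ∏ i, D (f (σ i)) i) := by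
        simp_rw [det_apply' (D.submatrix _ id), mul_sum, submatrix_apply, id]
    _ = ∑ σ : Perm ι, ∑ f : ι → κ, det (E.submatrix f id) * ∏ i, D (f i) i := by
        rw [sum_comm]
        exact sum_congr rfl fun σ _ => reindex σ
    _ = _ := by rw [sum_const, card_univ, Fintype.card_perm, nsmul_eq_mul]

theorem natCast_factorial_mul_det_transpose_mul (E D : Matrix κ ι R) :
    ((Fintype.card ι).factorial : R) * det (Eᵀ * D)
      = ∑ f : ι → κ, det (E.submatrix f id) * det (D.submatrix f id) := by
  rw [det_transpose_mul_eq_sum_det_submatrix_mul_prod, sum_det_submatrix_mul_det_submatrix]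

theorem natCast_factorial_mul_det_conjTranspose_mul [StarRing R] (C D : Matrix κ ι R) :
    ((Fintype.card ι).factorial : R) * det (Cᴴ * D)
      = ∑ f : ι → κ, star (det (C.submatrix f id)) * det (D.submatrix f id) := by
  have hsub (f : ι → κ) : Cᴴᵀ.submatrix f id = (C.submatrix f id)ᴴᵀ := rfl
  rw [← transpose_transpose Cᴴ, natCast_factorial_mul_det_transpose_mul]
  simp only [hsub, det_transpose, det_conjTranspose]

end CauchyBinet

variable {𝕜 κ ι β : Type*} [RCLike 𝕜] [Fintype κ] [Fintype ι] [DecidableEq ι] [Fintype β]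

theorem posSemidef_det_conjTranspose_mul (N : β → Matrix κ ι 𝕜) :
    (of fun a b => det ((N a)ᴴ * N b)).PosSemidef := by
  set G : Matrix (ι → κ) β 𝕜 := of fun f a => det ((N a).submatrix f id)
  have hG : (of fun a b => det ((N a)ᴴ * N b))
      = ((Fintype.card ι).factorial : ℝ)⁻¹ • (Gᴴ * G) := by
    ext a b
    rw [smul_apply, RCLike.real_smul_eq_coe_mul, mul_apply]
    simp only [conjTranspose_apply, G, of_apply, ← natCast_factorial_mul_det_conjTranspose_mul]
    push_cast
    field_simp
  rw [hG]
  exact (posSemidef_conjTranspose_mul_self G).smul (by positivity)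

omit [DecidableEq ι] in
open scoped MatrixOrder in
theorem PosSemidef.exists_conjTranspose_mul_blocks {M : Matrix (β × ι) (β × ι) 𝕜} (hM : M.PosSemidef) :
    ∃ N : β → Matrix (β × ι) ι 𝕜, ∀ a b i j, M (a, i) (b, j) = ((N a)ᴴ * N b) i j := by
  classical
  obtain ⟨B, rfl⟩ := CStarAlgebra.nonneg_iff_eq_star_mul_self.mp hM.nonneg
  exact ⟨fun a => of fun k i => B k (a, i), fun a b i j => by simp [mul_apply]⟩

end Matrix

theorem stmt10 (m n : ℕ) (A : Fin n → Fin n → Matrix (Fin m) (Fin m) ℂ)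
    (hA : IsPosSemidefBlock A) :
    (Matrix.of fun α β : Fin n => (A α β).det).PosSemidef := by
  obtain ⟨N, hN⟩ := hA.exists_conjTranspose_mul_blocks
  obtain rfl : A = fun α β => (N α)ᴴ * N β := funext₂ fun α β => ext fun i j => hN α β i j
  exact posSemidef_det_conjTranspose_mul N
end

section
/- Let f : ℝ≥0^m → ℂ be given by f(x₁,…,x_m) = ∑_{j=0}^∞ b_j (x₁⋯x_m)^j with all b_j ≥ 0 (and the series convergent on ℝ≥0^m). Then for all n ∈ ℕ and all positive semidefinite n×n block matrices (A_{αβ}), (B_{αβ}) with positive semidefinite m×m blocks such that each product A_{αβ}B_{αβ} is positive semidefinite, the n×n matrix (f(A_{αβ}B_{αβ})) is positive semidefinite. -/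
open Matrix
open scoped ComplexOrder

/-!
Since `A_{αβ} B_{αβ}` is positive semidefinite, the product of its eigenvalues is
`det A_{αβ} · det B_{αβ}`, so the matrix in question is `∑ⱼ bⱼ C^{∘j}` with
`C = (det A_{αβ}) ∘ (det B_{αβ})`, where `∘` is the Hadamard product.
Writing the block matrix `(A_{αβ})` as a Gram matrix, `A_{αβ} = Y_α Y_βᴴ`, the Cauchy–Binet
expansion `m! · det (Y_α Y_βᴴ) = ∑_g det (Y_α)_g · conj (det (Y_β)_g)` over all column
selections `g` shows that `(det A_{αβ})` is itself a Gram matrix, hence positive semidefinite.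
Schur's product theorem then makes every Hadamard power `C^{∘j}` positive semidefinite, and
positive semidefinite matrices form a closed additive submonoid, which contains the series.
-/

namespace Matrix

variable {n 𝕜 : Type*} [Fintype n] [RCLike 𝕜]

theorem isClosed_setOf_posSemidef : IsClosed {M : Matrix n n 𝕜 | M.PosSemidef} := by
  have hset : {M : Matrix n n 𝕜 | M.PosSemidef} =
      {M | Mᴴ = M} ∩ ⋂ x : n → 𝕜, {M | 0 ≤ star x ⬝ᵥ (M *ᵥ x)} := by
    ext M
    simp only [posSemidef_iff_dotProduct_mulVec, Set.mem_ofPred_eq, Set.mem_inter_iff,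
      Set.mem_iInter]
    rfl
  rw [hset]
  refine (isClosed_eq (by fun_prop) continuous_id).inter (isClosed_iInter fun x => ?_)
  exact isClosed_le continuous_const (by fun_prop)

theorem posSemidef_tsum {ι : Type*} {F : ι → Matrix n n 𝕜} (hF : ∀ i, (F i).PosSemidef) :
    (∑' i, F i).PosSemidef := by
  let S : AddSubmonoid (Matrix n n 𝕜) :=
    { carrier := {M | M.PosSemidef}, add_mem' := PosSemidef.add, zero_mem' := PosSemidef.zero }
  exact tsum_mem (s := S) isClosed_setOf_posSemidef hF

theorem PosSemidef.map_pow {C : Matrix n n 𝕜} (hC : C.PosSemidef) (k : ℕ) :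
    (C.map (· ^ k)).PosSemidef := by
  induction k with
  | zero =>
    convert posSemidef_vecMulVec_self_star (fun _ : n => (1 : 𝕜)) using 1
    ext i j
    simp [vecMulVec_apply]
  | succ k ih =>
    convert ih.hadamard hC using 1
    ext i j
    simp [pow_succ]

theorem PosSemidef.map_tsum_mul_pow {C : Matrix n n 𝕜} (hC : C.PosSemidef) {b : ℕ → ℝ}
    (hb : ∀ k, 0 ≤ b k) (hs : ∀ i j, Summable fun k => (b k : 𝕜) * C i j ^ k) :
    (C.map fun z => ∑' k, (b k : 𝕜) * z ^ k).PosSemidef := by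
  have hseries : HasSum (fun k => (b k : 𝕜) • C.map (· ^ k))
      (C.map fun z => ∑' k, (b k : 𝕜) * z ^ k) :=
    Pi.hasSum.mpr fun i => Pi.hasSum.mpr fun j => by simpa using (hs i j).hasSum
  rw [← hseries.tsum_eq]
  exact posSemidef_tsum fun k => (hC.map_pow k).smul (RCLike.ofReal_nonneg.mpr (hb k))

section CauchyBinet

variable {m K R : Type*} [Fintype m] [DecidableEq m] [CommRing R]

theorem det_mul_eq_sum_prod_mul_det_submatrix [Fintype K] (M : Matrix m K R)
    (N : Matrix K m R) :
    det (M * N) = ∑ g : m → K, (∏ i, M i (g i)) * det (N.submatrix g id) := by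
  have hrows : det (M * N) =
      (detRowAlternating : (m → R) [⋀^m]→ₗ[R] R).toMultilinearMap
        fun i => ∑ k, M i k • (N k : m → R) :=
    congrArg _ (funext fun i => funext fun j => by simp [mul_apply])
  rw [hrows, MultilinearMap.map_sum]
  simp only [MultilinearMap.map_smul_univ, smul_eq_mul]
  rfl

theorem det_submatrix_id_eq_sum (M : Matrix m K R) (g : m → K) :
    det (M.submatrix id g) = ∑ σ : Equiv.Perm m, Equiv.Perm.sign σ * ∏ i, M i (g (σ i)) := by
  rw [← det_transpose, det_apply']
  rfl

theorem sum_det_submatrix_mul_det_submatrix_s11 [Fintype K] (M : Matrix m K R) (N : Matrix K m R) :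
    ∑ g : m → K, det (M.submatrix id g) * det (N.submatrix g id) =
      (Fintype.card m).factorial * det (M * N) := by
  have hperm (σ : Equiv.Perm m) : det (M * N) =
      ∑ g : m → K, Equiv.Perm.sign σ * (∏ i, M i (g (σ i))) * det (N.submatrix g id) := by
    -- reindex by `g ↦ g ∘ σ`; permuting the rows of `N.submatrix g id` costs `sign σ`
    rw [det_mul_eq_sum_prod_mul_det_submatrix,
      ← (σ.symm.arrowCongr (Equiv.refl K)).sum_comp]
    refine Finset.sum_congr rfl fun g _ => ?_
    change _ * det ((N.submatrix g id).submatrix σ id) = _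
    rw [det_permute]
    simp only [Equiv.arrowCongr_apply, Equiv.coe_refl, Equiv.symm_symm, Function.comp_apply,
      id_eq]
    ring
  calc ∑ g : m → K, det (M.submatrix id g) * det (N.submatrix g id)
      = ∑ σ : Equiv.Perm m, ∑ g : m → K,
          Equiv.Perm.sign σ * (∏ i, M i (g (σ i))) * det (N.submatrix g id) := by
        simp only [det_submatrix_id_eq_sum, Finset.sum_mul]
        exact Finset.sum_comm
    _ = (Fintype.card m).factorial * det (M * N) := by
        simp [← hperm, Fintype.card_perm]

end CauchyBinet

theorem PosSemidef.det_blocks {ι m : Type*} [Fintype ι] [Fintype m] [DecidableEq m]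
    {A : ι → ι → Matrix m m 𝕜} (hA : (of fun p q : ι × m => A p.1 q.1 p.2 q.2).PosSemidef) :
    (of fun α β => (A α β).det).PosSemidef := by
  obtain ⟨r, v, hv⟩ := posSemidef_iff_eq_sum_vecMulVec.mp hA
  let Y : ι → Matrix m (Fin r) 𝕜 := fun α => of fun i k => v k (α, i)
  have hY (α β : ι) : A α β = Y α * (Y β)ᴴ := by
    ext i j
    simpa [Y, vecMulVec_apply, mul_apply, Matrix.sum_apply] using
      congrFun (congrFun hv (α, i)) (β, j)
  let U : Matrix ι (m → Fin r) 𝕜 := of fun α g => det ((Y α).submatrix id g)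
  have hfact : ((Fintype.card m).factorial : 𝕜) ≠ 0 := mod_cast Nat.factorial_ne_zero _
  have hgram :
      of (fun α β => (A α β).det) = ((Fintype.card m).factorial : 𝕜)⁻¹ • (U * Uᴴ) := by
    ext α β
    rw [of_apply, hY, smul_apply, smul_eq_mul, eq_inv_mul_iff_mul_eq₀ hfact,
      ← sum_det_submatrix_mul_det_submatrix_s11, mul_apply]
    refine Finset.sum_congr rfl fun g _ => ?_
    simp only [U, of_apply, conjTranspose_apply, ← det_conjTranspose,
      conjTranspose_submatrix]
  rw [hgram]
  exact (posSemidef_self_mul_conjTranspose U).smul (by positivity)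

end Matrix

theorem stmt11_general (m : ℕ) (b : ℕ → ℝ) (hb : ∀ j, 0 ≤ b j)
    (hconv : ∀ x : Fin m → ℝ, (∀ i, 0 ≤ x i) →
      Summable fun j : ℕ => b j * (∏ i, x i) ^ j)
    (n : ℕ) (A B : Fin n → Fin n → Matrix (Fin m) (Fin m) ℂ)
    (hbA : IsPosSemidefBlock A) (hbB : IsPosSemidefBlock B)
    (hAB : ∀ α β, (A α β * B α β).PosSemidef) :
    (Matrix.of fun α β : Fin n =>
      ∑' j : ℕ, (b j : ℂ) *
        (∏ i, ((hAB α β).isHermitian.eigenvalues i : ℂ)) ^ j).PosSemidef := by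
  let C : Matrix (Fin n) (Fin n) ℂ := of fun α β => (A α β).det * (B α β).det
  have hC : C.PosSemidef := (PosSemidef.det_blocks hbA).hadamard (PosSemidef.det_blocks hbB)
  have hCeig (α β : Fin n) : ∏ i, ((hAB α β).isHermitian.eigenvalues i : ℂ) = C α β := by
    simp [C, ← det_mul, (hAB α β).isHermitian.det_eq_prod_eigenvalues]
  simp only [hCeig]
  refine hC.map_tsum_mul_pow hb fun α β => ?_
  rw [← hCeig]
  simpa using Complex.summable_ofReal.mpr (hconv _ (hAB α β).eigenvalues_nonneg)

theorem stmt11 (m : ℕ) (b : ℕ → ℝ) (hb : ∀ j, 0 ≤ b j)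
    (hconv : ∀ x : Fin m → ℝ, (∀ i, 0 ≤ x i) →
      Summable fun j : ℕ => b j * (∏ i, x i) ^ j)
    (n : ℕ) (A B : Fin n → Fin n → Matrix (Fin m) (Fin m) ℂ)
    (hA : ∀ α β, (A α β).PosSemidef) (hB : ∀ α β, (B α β).PosSemidef)
    (hbA : IsPosSemidefBlock A) (hbB : IsPosSemidefBlock B)
    (hAB : ∀ α β, (A α β * B α β).PosSemidef) :
    (Matrix.of fun α β : Fin n =>
      ∑' j : ℕ, (b j : ℂ) *
        (∏ i, ((hAB α β).isHermitian.eigenvalues i : ℂ)) ^ j).PosSemidef :=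
  stmt11_general m b hb hconv n A B hbA hbB hAB
end
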